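/- Let φ : [0,1] → [0,1] be continuous and suppose that for each k ≥ 1 there is an interval I_k ⊆ [0,1] which is an s_k-horseshoe for φ consisting of s_k subintervals of equal length. Set ε_k = |I_k|/s_k, where |I_k| is the length of I_k, and assume ε_k → 0 as k → ∞. Then the upper metric mean dimension of ([0,1], |·|, φ) is at least limsup_{k→∞} log s_k / |log ε_k|. -/

import Mathlib

open Filter Set Topology

noncomputable section

/-- `sep(n,φ,ε)`: the maximal cardinality of an `(n,φ,ε)`-separated set with respect to
the metric `d`, where a set `A` is `(n,φ,ε)`-separated if for all distinct `x, y ∈ A`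
one has `max_{0 ≤ i < n} d(φ^i x, φ^i y) > ε`. -/
def sepNum {X : Type*} (d : X → X → ℝ) (φ : X → X) (n : ℕ) (ε : ℝ) : ℕ :=
  sSup {m : ℕ | ∃ A : Finset X,
    (∀ x ∈ A, ∀ y ∈ A, x ≠ y → ∃ i < n, ε < d (φ^[i] x) (φ^[i] y)) ∧ A.card = m}

/-- `sep(φ,ε) = limsup_{n→∞} (1/n) log sep(n,φ,ε)`. -/
def sepExp {X : Type*} (d : X → X → ℝ) (φ : X → X) (ε : ℝ) : ℝ :=
  Filter.limsup (fun n : ℕ => Real.log (sepNum d φ n ε) / n) Filter.atTop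

/-- The lower metric mean dimension: `liminf_{ε→0⁺} sep(φ,ε)/|log ε|`. -/
def mdimLower {X : Type*} (d : X → X → ℝ) (φ : X → X) : ℝ :=
  Filter.liminf (fun ε : ℝ => sepExp d φ ε / |Real.log ε|) (nhdsWithin 0 (Set.Ioi 0))

/-- The upper metric mean dimension: `limsup_{ε→0⁺} sep(φ,ε)/|log ε|`. -/
def mdimUpper {X : Type*} (d : X → X → ℝ) (φ : X → X) : ℝ :=
  Filter.limsup (fun ε : ℝ => sepExp d φ ε / |Real.log ε|) (nhdsWithin 0 (Set.Ioi 0))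

/-- The metric `d(x,y) = |x - y|` on `[0,1]`. -/
def dI : unitInterval → unitInterval → ℝ := fun x y => |(x : ℝ) - (y : ℝ)|

/-! Keeping every third leg of an `s`-horseshoe whose legs have length `ε` leaves `⌈s/3⌉` legs
that are pairwise more than `ε` apart and each cover the horseshoe under `φ`, so following all
itineraries through them yields `⌈s/3⌉ⁿ` points that are `(n, φ, ε)`-separated, whence
`log s ≤ sep(φ, ε) + log 3`. Dividing by `|log ε_k|`, the error `log 3 / |log ε_k|` vanishes
as `k → ∞`. The counting bound `sep(n, φ, ε) ≤ (⌊1/ε⌋ + 1)ⁿ` keeps `sep(φ, ε) / |log ε|`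
bounded near `0`, which is what makes the real-valued limsups comparable. -/

theorem Filter.limsup_le_limsup_of_le_comp_add {ι α : Type*} {f : Filter ι} [f.NeBot]
    {g : Filter α} {u c : ι → ℝ} {F : α → ℝ} {v : ι → α} (hv : Tendsto v f g)
    (hc : Tendsto c f (𝓝 0)) (hF_le : g.IsBoundedUnder (· ≤ ·) F)
    (hF_ge : g.IsBoundedUnder (· ≥ ·) F) (hu : f.IsCoboundedUnder (· ≤ ·) u)
    (h : ∀ᶠ i in f, u i ≤ F (v i) + c i) : limsup u f ≤ limsup F g := by
  have hFv_le : f.IsBoundedUnder (· ≤ ·) (F ∘ v) := hv.isBoundedUnder_comp hF_le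
  have hFv_ge : f.IsBoundedUnder (· ≥ ·) (F ∘ v) := hv.isBoundedUnder_comp hF_ge
  calc limsup u f ≤ limsup (F ∘ v + c) f :=
        limsup_le_limsup h hu (isBoundedUnder_le_add hFv_le hc.isBoundedUnder_le)
    _ ≤ limsup (F ∘ v) f + limsup c f :=
        limsup_add_le hFv_ge hFv_le hc.isBoundedUnder_ge.isCoboundedUnder_le hc.isBoundedUnder_le
    _ = limsup (F ∘ v) f := by rw [hc.limsup_eq, add_zero]
    _ ≤ limsup F g := hv.limsup_comp_le_limsup (hF_ge.mono hv).isCoboundedUnder_le hF_le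

section Separated

variable {X : Type*} {d : X → X → ℝ} {φ : X → X} {n : ℕ} {ε : ℝ}

variable (d φ n ε) in
def IsDynSeparated (A : Finset X) : Prop :=
  ∀ x ∈ A, ∀ y ∈ A, x ≠ y → ∃ i < n, ε < d (φ^[i] x) (φ^[i] y)

theorem sepNum_le {K : ℕ} (hK : ∀ A : Finset X, IsDynSeparated d φ n ε A → A.card ≤ K) :
    sepNum d φ n ε ≤ K :=
  csSup_le ⟨0, ∅, by simp⟩ fun _ ⟨A, hA, hcard⟩ => hcard ▸ hK A hA

/-- The bound `K` is needed because `sepNum` is an `sSup` in `ℕ`, which is `0` on unbounded sets. -/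
theorem IsDynSeparated.card_le_sepNum {K : ℕ}
    (hK : ∀ B : Finset X, IsDynSeparated d φ n ε B → B.card ≤ K) {A : Finset X}
    (hA : IsDynSeparated d φ n ε A) : A.card ≤ sepNum d φ n ε :=
  le_csSup ⟨K, fun _ ⟨B, hB, hcard⟩ => hcard ▸ hK B hB⟩ ⟨A, hA, rfl⟩

end Separated

section SepExp

variable {X : Type*} {d : X → X → ℝ} {φ : X → X} {ε : ℝ} {K : ℕ}

theorem Real.log_natCast_le_log_natCast {m n : ℕ} (h : m ≤ n) : Real.log m ≤ Real.log n := by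
  rcases m.eq_zero_or_pos with rfl | hm
  · simpa using Real.log_natCast_nonneg n
  · exact Real.log_le_log (by positivity) (by exact_mod_cast h)

theorem log_sepNum_div_le_log (hK : ∀ n, sepNum d φ n ε ≤ K ^ n) (n : ℕ) :
    Real.log (sepNum d φ n ε) / n ≤ Real.log K := by
  rcases n.eq_zero_or_pos with rfl | hn
  · simpa using Real.log_natCast_nonneg K
  rw [div_le_iff₀ (by positivity), mul_comm, ← Real.log_pow, ← Nat.cast_pow]
  exact Real.log_natCast_le_log_natCast (hK n)

theorem sepExp_le_log (hK : ∀ n, sepNum d φ n ε ≤ K ^ n) : sepExp d φ ε ≤ Real.log K :=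
  limsup_le_of_le
    (isCoboundedUnder_le_of_le atTop fun n => div_nonneg (Real.log_natCast_nonneg _) n.cast_nonneg)
    (.of_forall (log_sepNum_div_le_log hK))

theorem log_le_sepExp (hK : ∀ n, sepNum d φ n ε ≤ K ^ n) {M : ℕ}
    (hM : ∀ n, M ^ n ≤ sepNum d φ n ε) : Real.log M ≤ sepExp d φ ε := by
  refine le_limsup_of_frequently_le ?_ (isBoundedUnder_of ⟨_, log_sepNum_div_le_log hK⟩)
  refine (eventually_atTop.2 ⟨1, fun n hn => ?_⟩).frequently
  rw [le_div_iff₀ (by positivity), mul_comm, ← Real.log_pow, ← Nat.cast_pow]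
  exact Real.log_natCast_le_log_natCast (hM n)

end SepExp

section Horseshoe

variable {X : Type*} {φ : X → X} {J : Set X}

theorem exists_mem_iterate_mem_of_horseshoe {ι : Type*} {L : ι → Set X} (hJ : J.Nonempty)
    (hLJ : ∀ i, L i ⊆ J) (hJL : ∀ i, J ⊆ φ '' L i) : ∀ {n : ℕ} (w : Fin n → ι),
      ∃ x ∈ J, ∀ j : Fin n, φ^[j] x ∈ L (w j)
  | 0, _ => hJ.imp fun _ hx => ⟨hx, fun j => j.elim0⟩
  | n + 1, w => by
    obtain ⟨x, hxJ, hx⟩ := exists_mem_iterate_mem_of_horseshoe hJ hLJ hJL (Fin.tail w)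
    obtain ⟨y, hy, rfl⟩ := hJL (w 0) hxJ
    refine ⟨y, hLJ _ hy, Fin.cases hy fun j => ?_⟩
    simpa [Function.iterate_succ_apply, Fin.tail] using hx j

theorem pow_le_sepNum_of_horseshoe [PseudoMetricSpace X] {ε : ℝ} (hε : 0 ≤ ε) {m n K : ℕ}
    {L : Fin m → Set X} (hJ : J.Nonempty) (hLJ : ∀ i, L i ⊆ J) (hJL : ∀ i, J ⊆ φ '' L i)
    (hL : Pairwise fun i j => ∀ x ∈ L i, ∀ y ∈ L j, ε < dist x y)
    (hK : ∀ A : Finset X, IsDynSeparated dist φ n ε A → A.card ≤ K) :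
    m ^ n ≤ sepNum dist φ n ε := by
  classical
  choose G _ hG using fun w : Fin n → Fin m => exists_mem_iterate_mem_of_horseshoe hJ hLJ hJL w
  have hsep : ∀ w w' : Fin n → Fin m, ∀ j, w j ≠ w' j → ε < dist (φ^[j] (G w)) (φ^[j] (G w')) :=
    fun w w' j hj => hL hj _ (hG w j) _ (hG w' j)
  have hinj : Function.Injective G := fun w w' hw => by
    by_contra hne
    obtain ⟨j, hj⟩ := Function.ne_iff.1 hne
    have hlt := hsep w w' j hj
    rw [hw, dist_self] at hlt
    exact hlt.not_ge hε
  have hA : IsDynSeparated dist φ n ε (Finset.univ.image G) := by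
    simp only [IsDynSeparated, Finset.mem_image, Finset.mem_univ, true_and]
    rintro _ ⟨w, rfl⟩ _ ⟨w', rfl⟩ hne
    obtain ⟨j, hj⟩ := Function.ne_iff.1 fun h => hne (congrArg G h)
    exact ⟨j, j.isLt, hsep w w' j hj⟩
  simpa [Finset.card_image_of_injective _ hinj] using hA.card_le_sepNum hK

end Horseshoe

section UnitInterval

variable {φ : unitInterval → unitInterval} {ε A B : ℝ} {S : ℕ}

theorem dI_eq_dist : dI = dist := by
  ext x y
  exact (Real.dist_eq _ _).symm

theorem IsDynSeparated.card_le_floor_pow (hε : 0 < ε) {n : ℕ} {A : Finset unitInterval}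
    (hA : IsDynSeparated dI φ n ε A) : A.card ≤ (⌊1 / ε⌋₊ + 1) ^ n := by
  have hcell : ∀ x : unitInterval, ⌊(x : ℝ) / ε⌋₊ < ⌊1 / ε⌋₊ + 1 := fun x =>
    Nat.lt_succ_of_le (Nat.floor_le_floor (div_le_div_of_nonneg_right x.2.2 hε.le))
  let code : unitInterval → Fin n → Fin (⌊1 / ε⌋₊ + 1) := fun x i => ⟨_, hcell (φ^[i] x)⟩
  have hinj : Set.InjOn code A := by
    intro x hx y hy hxy
    by_contra hne
    obtain ⟨i, hi, hlt⟩ := hA x hx y hy hne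
    have hfloor : ⌊(φ^[i] x : ℝ) / ε⌋ = ⌊(φ^[i] y : ℝ) / ε⌋ := by
      rw [← Int.natCast_floor_eq_floor (div_nonneg (φ^[i] x).2.1 hε.le),
        ← Int.natCast_floor_eq_floor (div_nonneg (φ^[i] y).2.1 hε.le)]
      exact congrArg (fun k : Fin _ => (k : ℤ)) (congrFun hxy ⟨i, hi⟩)
    have hclose := Int.abs_sub_lt_one_of_floor_eq_floor hfloor
    rw [← sub_div, abs_div, abs_of_pos hε, div_lt_one hε] at hclose
    exact hlt.not_gt hclose
  simpa using Finset.card_le_card_of_injOn code (fun _ _ => Finset.mem_univ _) hinj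

theorem sepNum_dI_le (hε : 0 < ε) (n : ℕ) : sepNum dI φ n ε ≤ (⌊1 / ε⌋₊ + 1) ^ n :=
  sepNum_le fun _ hA => hA.card_le_floor_pow hε

theorem sepExp_dI_le (hε : 0 < ε) (hε2 : ε ≤ 1 / 2) : sepExp dI φ ε ≤ 2 * |Real.log ε| := by
  have hinv : 2 ≤ ε⁻¹ := by rw [le_inv_comm₀ two_pos hε]; linarith
  have hfloor : (⌊1 / ε⌋₊ : ℝ) ≤ ε⁻¹ := (Nat.floor_le (by positivity)).trans_eq (one_div ε)
  calc sepExp dI φ ε ≤ Real.log ((⌊1 / ε⌋₊ + 1 : ℕ)) := sepExp_le_log (sepNum_dI_le hε)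
    _ ≤ Real.log (ε⁻¹ ^ 2) := Real.log_le_log (by positivity) (by push_cast; nlinarith)
    _ = 2 * |Real.log ε| := by
      rw [Real.log_pow, Real.log_inv, abs_of_neg (Real.log_neg hε (by linarith))]
      push_cast
      ring

theorem sepExp_dI_nonneg (hε : 0 < ε) : 0 ≤ sepExp dI φ ε := by
  have hsingle : ∀ n, IsDynSeparated dI φ n ε {0} := by simp [IsDynSeparated]
  simpa using log_le_sepExp (sepNum_dI_le hε) (M := 1) fun n => by
    simpa using (hsingle n).card_le_sepNum fun _ hA => hA.card_le_floor_pow hε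

theorem isBoundedUnder_le_sepExp_dI_div_abs_log :
    (𝓝[>] (0 : ℝ)).IsBoundedUnder (· ≤ ·) fun ε => sepExp dI φ ε / |Real.log ε| := by
  refine isBoundedUnder_of_eventually_le (a := 2) ?_
  filter_upwards [Ioo_mem_nhdsGT (by norm_num : (0 : ℝ) < 1 / 2)] with ε ⟨hε, hε2⟩
  have hlog : 0 < |Real.log ε| := abs_pos.2 (Real.log_neg hε (by linarith)).ne
  exact div_le_of_le_mul₀ hlog.le two_pos.le (sepExp_dI_le hε hε2.le)

theorem isBoundedUnder_ge_sepExp_dI_div_abs_log :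
    (𝓝[>] (0 : ℝ)).IsBoundedUnder (· ≥ ·) fun ε => sepExp dI φ ε / |Real.log ε| := by
  refine isBoundedUnder_of_eventually_ge (a := 0) ?_
  filter_upwards [self_mem_nhdsWithin] with ε hε
  exact div_nonneg (sepExp_dI_nonneg hε) (abs_nonneg _)

variable (φ) in
def IsUniformHorseshoe (A B : ℝ) (S : ℕ) : Prop :=
  ∀ i < S, Icc A B ⊆ (fun x : unitInterval => (φ x : ℝ)) ''
    {x : unitInterval | (x : ℝ) ∈
      Icc (A + (i : ℝ) * ((B - A) / (S : ℝ))) (A + ((i : ℝ) + 1) * ((B - A) / (S : ℝ)))}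

theorem pow_le_sepNum_dI_of_horseshoe (hAB : A < B) (hS : 1 ≤ S)
    (hh : IsUniformHorseshoe φ A B S)
    (n : ℕ) : ((S + 2) / 3) ^ n ≤ sepNum dI φ n ((B - A) / S) := by
  set e := (B - A) / (S : ℝ)
  have he : 0 < e := div_pos (sub_pos.2 hAB) (by exact_mod_cast hS)
  have hSe : (S : ℝ) * e = B - A := mul_div_cancel₀ _ (by positivity)
  set J : Set unitInterval := {x | (x : ℝ) ∈ Icc A B}
  set leg : ℕ → Set unitInterval := fun i => {x | (x : ℝ) ∈ Icc (A + i * e) (A + (i + 1) * e)}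
  have hleg : ∀ i < S, leg i ⊆ J := fun i hi x ⟨hx₁, hx₂⟩ => by
    have : (i : ℝ) + 1 ≤ S := by exact_mod_cast hi
    constructor <;> nlinarith [mul_nonneg i.cast_nonneg he.le]
  have hJleg : ∀ i < S, J ⊆ φ '' leg i := fun i hi x hx => by
    obtain ⟨y, hy, hyx⟩ := hh i hi hx
    exact ⟨y, hy, Subtype.ext hyx⟩
  have hgap : ∀ u v : ℕ, u < v → ∀ x ∈ leg (3 * u), ∀ y ∈ leg (3 * v), e < (y : ℝ) - x := by
    intro u v huv x ⟨_, hx⟩ y ⟨hy, _⟩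
    have : (u : ℝ) + 1 ≤ v := by exact_mod_cast huv
    push_cast at hx hy
    nlinarith
  have h3 : ∀ u : Fin ((S + 2) / 3), 3 * (u : ℕ) < S := fun u => by omega
  rw [dI_eq_dist]
  refine pow_le_sepNum_of_horseshoe he.le (J := J) (L := fun u => leg (3 * u)) ?_
    (fun u => hleg _ (h3 u)) (fun u => hJleg _ (h3 u)) ?_
    fun _ hA => (dI_eq_dist ▸ hA).card_le_floor_pow he
  · obtain ⟨y, -, hy⟩ := hh 0 hS ⟨le_rfl, hAB.le⟩
    exact ⟨φ y, by simp [J, hy, hAB.le]⟩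
  · intro u v huv x hx y hy
    rw [Subtype.dist_eq, Real.dist_eq]
    rcases (Fin.val_injective.ne huv).lt_or_gt with h | h
    · exact (hgap _ _ h x hx y hy).trans_le (abs_sub_comm (x : ℝ) y ▸ le_abs_self _)
    · exact (hgap _ _ h y hy x hx).trans_le (le_abs_self _)

theorem log_le_sepExp_dI_add_log_three (hAB : A < B) (hS : 1 ≤ S)
    (hh : IsUniformHorseshoe φ A B S) :
    Real.log S ≤ sepExp dI φ ((B - A) / S) + Real.log 3 := by
  have he : 0 < (B - A) / S := div_pos (sub_pos.2 hAB) (by exact_mod_cast hS)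
  have hm : 0 < (S + 2) / 3 := by omega
  calc Real.log S ≤ Real.log (((S + 2) / 3 : ℕ) * 3 : ℕ) :=
        Real.log_natCast_le_log_natCast (by omega)
    _ = Real.log ((S + 2) / 3 : ℕ) + Real.log 3 := by
      push_cast
      exact Real.log_mul (by positivity) three_ne_zero
    _ ≤ sepExp dI φ ((B - A) / S) + Real.log 3 := by
      gcongr
      exact log_le_sepExp (sepNum_dI_le he) (pow_le_sepNum_dI_of_horseshoe hAB hS hh)

end UnitInterval

theorem mdimUpper_ge_of_horseshoes_general (φ : unitInterval → unitInterval)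
    (a b : ℕ → ℝ) (hab : ∀ k, a k < b k)
    (s : ℕ → ℕ) (hs : ∀ k, 1 ≤ s k)
    (hhorse : ∀ k, ∀ i < s k, Set.Icc (a k) (b k) ⊆
      (fun x : unitInterval => (φ x : ℝ)) ''
        {x : unitInterval | (x : ℝ) ∈
          Set.Icc (a k + (i : ℝ) * ((b k - a k) / (s k : ℝ)))
            (a k + ((i : ℝ) + 1) * ((b k - a k) / (s k : ℝ)))})
    (hε : Filter.Tendsto (fun k : ℕ => (b k - a k) / (s k : ℝ)) Filter.atTop (nhds 0)) :
    Filter.limsup (fun k : ℕ =>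
        Real.log (s k) / |Real.log ((b k - a k) / (s k : ℝ))|) Filter.atTop
      ≤ mdimUpper dI φ := by
  set e := fun k => (b k - a k) / (s k : ℝ)
  have he : Tendsto e atTop (𝓝[>] 0) := tendsto_nhdsWithin_iff.2
    ⟨hε, .of_forall fun k => div_pos (sub_pos.2 (hab k)) (by exact_mod_cast hs k)⟩
  have hlog : Tendsto (fun k => |Real.log (e k)|) atTop atTop :=
    tendsto_abs_atBot_atTop.comp (Real.tendsto_log_nhdsGT_zero.comp he)
  have hc : Tendsto (fun k => Real.log 3 / |Real.log (e k)|) atTop (𝓝 0) :=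
    tendsto_const_nhds.div_atTop hlog
  refine limsup_le_limsup_of_le_comp_add he hc
    isBoundedUnder_le_sepExp_dI_div_abs_log isBoundedUnder_ge_sepExp_dI_div_abs_log
    (isCoboundedUnder_le_of_le atTop fun k => div_nonneg (Real.log_natCast_nonneg _) (abs_nonneg _))
    ?_
  filter_upwards [hlog.eventually_gt_atTop 0] with k hk
  rw [← add_div]
  exact div_le_div_of_nonneg_right (log_le_sepExp_dI_add_log_three (hab k) (hs k) (hhorse k)) hk.le

/-- If for each `k` the interval `[a_k, b_k] ⊆ [0,1]` is an `s_k`-horseshoe for `φ` with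
equal-length legs and `ε_k = (b_k - a_k)/s_k → 0`, then the upper metric mean dimension is
at least `limsup_k log s_k / |log ε_k|`. -/
theorem mdimUpper_ge_of_horseshoes (φ : unitInterval → unitInterval) (hφ : Continuous φ)
    (a b : ℕ → ℝ) (hab : ∀ k, a k < b k)
    (hsub : ∀ k, Set.Icc (a k) (b k) ⊆ Set.Icc (0 : ℝ) 1)
    (s : ℕ → ℕ) (hs : ∀ k, 1 ≤ s k)
    (hhorse : ∀ k, ∀ i < s k, Set.Icc (a k) (b k) ⊆
      (fun x : unitInterval => (φ x : ℝ)) ''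
        {x : unitInterval | (x : ℝ) ∈
          Set.Icc (a k + (i : ℝ) * ((b k - a k) / (s k : ℝ)))
            (a k + ((i : ℝ) + 1) * ((b k - a k) / (s k : ℝ)))})
    (hε : Filter.Tendsto (fun k : ℕ => (b k - a k) / (s k : ℝ)) Filter.atTop (nhds 0)) :
    Filter.limsup (fun k : ℕ =>
        Real.log (s k) / |Real.log ((b k - a k) / (s k : ℝ))|) Filter.atTop
      ≤ mdimUpper dI φ :=
  mdimUpper_ge_of_horseshoes_general φ a b hab s hs hhorse hε
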